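/- For every integer M ≥ 1, let Q be the (M+2)×(M+2) real matrix with rows and columns indexed by 0,…,M+1, whose nonzero entries are Q_{0,0} = Q_{0,1} = 1/2, Q_{M+1,M} = Q_{M+1,M+1} = 1/2, and Q_{i,i−1} = Q_{i,i+1} = 1/8, Q_{i,i} = 3/4 for 1 ≤ i ≤ M. Then, with S = diag(2,1,…,1,2), the matrix A = S⁻¹ Q S is symmetric positive definite, and there exists a real (M+2)×(M+2) matrix Z with Z² = Q. -/

import Mathlib

/-- The matrix representation `Q` of the quadratic-spline collocation averaging operator
`θ_x`: `Q_{0,0} = Q_{0,1} = 1/2`, `Q_{M+1,M} = Q_{M+1,M+1} = 1/2`, and, for `1 ≤ i ≤ M`,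
`Q_{i,i-1} = Q_{i,i+1} = 1/8`, `Q_{i,i} = 3/4`; all other entries vanish. -/
noncomputable def Qmat (M : ℕ) : Matrix (Fin (M + 2)) (Fin (M + 2)) ℝ := fun i j =>
  if i.val = 0 then (if j.val = 0 ∨ j.val = 1 then 1 / 2 else 0)
  else if i.val = M + 1 then (if j.val = M ∨ j.val = M + 1 then 1 / 2 else 0)
  else if j.val + 1 = i.val ∨ j.val = i.val + 1 then 1 / 8
  else if j = i then 3 / 4
  else 0

/-- The diagonal matrix `S = diag(2, 1, …, 1, 2)` of size `M + 2`. -/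
noncomputable def Smat (M : ℕ) : Matrix (Fin (M + 2)) (Fin (M + 2)) ℝ :=
  Matrix.diagonal (fun i => if i.val = 0 ∨ i.val = M + 1 then 2 else 1)

/-!
Conjugating by `S = diag(2, 1, …, 1, 2)` turns `Q` into a symmetric tridiagonal matrix whose
off-diagonal entries are at most `1/4`, while its diagonal is `1/2` in the two boundary rows and
`3/4` inside; `Q` itself is only weakly dominant in its boundary rows, and the weight `2` makes
them strict. So `S⁻¹ Q S` is positive definite by Gershgorin's circle theorem, and if `W` is its
positive semidefinite square root, then `S W S⁻¹` is a square root of `Q`.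
-/

open Matrix Finset

theorem Matrix.posDef_of_sum_abs_lt_diag {n : Type*} [Fintype n] [DecidableEq n]
    {A : Matrix n n ℝ} (hA : A.IsHermitian)
    (h : ∀ k, ∑ j ∈ univ.erase k, |A k j| < A k k) : A.PosDef := by
  refine hA.posDef_iff_eigenvalues_pos.mpr fun i => ?_
  have hμ : Module.End.HasEigenvalue (toLin' A) (hA.eigenvalues i) := by
    rw [Module.End.hasEigenvalue_iff_mem_spectrum, spectrum_toLin']
    exact hA.eigenvalues_mem_spectrum_real i
  obtain ⟨k, hk⟩ := eigenvalue_mem_ball hμ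
  rw [Metric.mem_closedBall, Real.dist_eq] at hk
  simp only [Real.norm_eq_abs] at hk
  linarith [h k, neg_abs_le (hA.eigenvalues i - A k k)]

open scoped ComplexOrder in
theorem Matrix.exists_mul_self_eq_of_posSemidef_conj {n 𝕜 : Type*} [Fintype n] [DecidableEq n]
    [RCLike 𝕜] {P Q : Matrix n n 𝕜} (hP : IsUnit P) (h : (P⁻¹ * Q * P).PosSemidef) :
    ∃ Z : Matrix n n 𝕜, Z * Z = Q := by
  open scoped MatrixOrder in
  obtain ⟨W, hW⟩ : ∃ W, W * W = P⁻¹ * Q * P := ⟨_, CFC.sqrt_mul_sqrt_self _ h.nonneg⟩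
  refine ⟨P * W * P⁻¹, ?_⟩
  have hP' : IsUnit P.det := (Matrix.isUnit_iff_isUnit_det P).mp hP
  calc P * W * P⁻¹ * (P * W * P⁻¹) = P * (W * W) * P⁻¹ := by
        simp only [Matrix.mul_assoc, Matrix.nonsing_inv_mul_cancel_left _ _ hP']
    _ = Q := by
        rw [hW]; simp only [Matrix.mul_assoc, Matrix.mul_nonsing_inv _ hP', Matrix.mul_one,
          Matrix.mul_nonsing_inv_cancel_left _ _ hP']

theorem Fin.sum_ite_val_add_one_eq {n : ℕ} (i : Fin n) {α : Type*} [AddCommMonoid α] (c : α) :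
    ∑ j : Fin n, (if j.val + 1 = i.val then c else 0) = if 0 < i.val then c else 0 := by
  rw [Fin.sum_univ_eq_sum_range (fun j => if j + 1 = i.val then c else 0), range_eq_Ico,
    sum_Ico_add' (fun j => if j = i.val then c else 0), sum_ite_eq']
  simp only [mem_Ico]
  split_ifs <;> first | rfl | omega

theorem Fin.sum_ite_val_eq_add_one {n : ℕ} (i : Fin n) {α : Type*} [AddCommMonoid α] (c : α) :
    ∑ j : Fin n, (if j.val = i.val + 1 then c else 0) = if i.val + 1 < n then c else 0 := by
  rw [Fin.sum_univ_eq_sum_range (fun j => if j = i.val + 1 then c else 0), sum_ite_eq']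
  simp

theorem Matrix.inv_diagonal_mul_mul_diagonal_apply {n K : Type*} [Fintype n] [DecidableEq n]
    [Field K] {d : n → K} (hd : ∀ i, d i ≠ 0) (B : Matrix n n K) (i j : n) :
    ((diagonal d)⁻¹ * B * diagonal d) i j = (d i)⁻¹ * B i j * d j := by
  have hinv : (diagonal d)⁻¹ = diagonal d⁻¹ :=
    inv_eq_left_inv (by rw [diagonal_mul_diagonal]; simp [hd])
  rw [hinv, mul_diagonal, diagonal_mul, Pi.inv_apply]

noncomputable def smatWeight (M : ℕ) (i : Fin (M + 2)) : ℝ :=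
  if i.val = 0 ∨ i.val = M + 1 then 2 else 1

theorem Smat_eq_diagonal (M : ℕ) : Smat M = diagonal (smatWeight M) := rfl

theorem smatWeight_ne_zero (M : ℕ) (i : Fin (M + 2)) : smatWeight M i ≠ 0 := by
  unfold smatWeight; split_ifs <;> norm_num

theorem isUnit_Smat (M : ℕ) : IsUnit (Smat M) := by
  rw [Smat_eq_diagonal, isUnit_diagonal]
  exact Pi.isUnit_iff.mpr fun i => (smatWeight_ne_zero M i).isUnit

theorem conj_Smat_apply (M : ℕ) (i j : Fin (M + 2)) :
    ((Smat M)⁻¹ * Qmat M * Smat M) i j = (smatWeight M i)⁻¹ * Qmat M i j * smatWeight M j :=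
  inv_diagonal_mul_mul_diagonal_apply (smatWeight_ne_zero M) _ i j

theorem isSymm_conj_Smat (M : ℕ) : ((Smat M)⁻¹ * Qmat M * Smat M).IsSymm := by
  ext i j
  rw [transpose_apply, conj_Smat_apply, conj_Smat_apply]
  unfold Qmat smatWeight
  simp only [Fin.ext_iff]
  split_ifs <;> first | omega | norm_num

theorem abs_conj_Smat_apply_le {M : ℕ} (hM : 1 ≤ M) {i j : Fin (M + 2)} (hji : j ≠ i) :
    |((Smat M)⁻¹ * Qmat M * Smat M) i j| ≤
      (if j.val + 1 = i.val then 1 / 4 else 0) + (if j.val = i.val + 1 then 1 / 4 else 0) := by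
  rw [conj_Smat_apply]
  unfold Qmat smatWeight
  simp only [Ne, Fin.ext_iff] at hji ⊢
  split_ifs <;> first | omega | norm_num

theorem conj_Smat_apply_self_gt {M : ℕ} (i : Fin (M + 2)) :
    (if 0 < i.val then 1 / 4 else 0) + (if i.val + 1 < M + 2 then 1 / 4 else 0) <
      ((Smat M)⁻¹ * Qmat M * Smat M) i i := by
  rw [conj_Smat_apply]
  unfold Qmat smatWeight
  split_ifs <;> first | omega | norm_num

theorem sum_abs_conj_Smat_lt_apply_self {M : ℕ} (hM : 1 ≤ M) (i : Fin (M + 2)) :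
    ∑ j ∈ univ.erase i, |((Smat M)⁻¹ * Qmat M * Smat M) i j| <
      ((Smat M)⁻¹ * Qmat M * Smat M) i i :=
  calc ∑ j ∈ univ.erase i, |((Smat M)⁻¹ * Qmat M * Smat M) i j|
      ≤ ∑ j ∈ univ.erase i, ((if j.val + 1 = i.val then (1 / 4 : ℝ) else 0) +
          (if j.val = i.val + 1 then 1 / 4 else 0)) :=
        sum_le_sum fun j hj => abs_conj_Smat_apply_le hM (ne_of_mem_erase hj)
    _ ≤ ∑ j : Fin (M + 2), ((if j.val + 1 = i.val then (1 / 4 : ℝ) else 0) +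
          (if j.val = i.val + 1 then 1 / 4 else 0)) :=
        sum_le_sum_of_subset_of_nonneg (erase_subset _ _) fun _ _ _ => by split_ifs <;> norm_num
    _ = (if 0 < i.val then 1 / 4 else 0) + (if i.val + 1 < M + 2 then 1 / 4 else 0) := by
        rw [sum_add_distrib, Fin.sum_ite_val_add_one_eq, Fin.sum_ite_val_eq_add_one]
    _ < ((Smat M)⁻¹ * Qmat M * Smat M) i i := conj_Smat_apply_self_gt i

theorem stmt6 (M : ℕ) (hM : 1 ≤ M) :
    ((Smat M)⁻¹ * Qmat M * Smat M).IsSymm ∧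
    ((Smat M)⁻¹ * Qmat M * Smat M).PosDef ∧
    ∃ Z : Matrix (Fin (M + 2)) (Fin (M + 2)) ℝ, Z * Z = Qmat M := by
  have hsymm := isSymm_conj_Smat M
  have hpd : ((Smat M)⁻¹ * Qmat M * Smat M).PosDef :=
    posDef_of_sum_abs_lt_diag (isHermitian_iff_isSymm.mpr hsymm)
      (sum_abs_conj_Smat_lt_apply_self hM)
  exact ⟨hsymm, hpd, exists_mul_self_eq_of_posSemidef_conj (isUnit_Smat M) hpd.posSemidef⟩
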